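/- arXiv:2401.17077 — 6 statements merged into one kernel-verified Lean document; each statement's English description precedes it below -/
import Mathlib

section
/- Under the stated hypotheses, for every t ∈ [0, τ] one has log λ(t) ≤ B_β · B_W + ‖G(0)‖ · L_x · t · exp(L_G · L_x · t); that is, z(t) + ⟨β, W⟩ ≤ B_β · B_W + ‖G(0)‖ · L_x · t · exp(L_G · L_x · t). -/
open scoped RealInnerProductSpace

open Real Set

/-! The log intensity splits as `z t + ⟪β, W⟫`; the second term is at most `Bβ * BW` by
Cauchy–Schwarz. For the latent state, Lipschitz continuity of `G` gives
`|z'| ≤ ‖G z‖ ‖x'‖ ≤ LG Lx |z| + ‖G 0‖ Lx`, so Grönwall's inequality with `z 0 = 0` bounds `|z t|`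
by `gronwallBound 0 (LG Lx) (‖G 0‖ Lx) t`, which is at most `‖G 0‖ Lx t exp (LG Lx t)`
because `exp y - 1 ≤ y exp y`. -/

theorem Real.exp_sub_one_le_mul_exp (y : ℝ) : exp y - 1 ≤ y * exp y := by
  have h := mul_le_mul_of_nonneg_right (one_sub_le_exp_neg y) (exp_pos y).le
  rwa [← exp_add, neg_add_cancel, exp_zero, sub_mul, one_mul, sub_le_comm] at h

theorem gronwallBound_zero_le_mul_exp {K ε x : ℝ} (hK : 0 ≤ K) (hε : 0 ≤ ε) :
    gronwallBound 0 K ε x ≤ ε * x * exp (K * x) := by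
  rcases hK.eq_or_lt with rfl | hK
  · simp [gronwallBound_K0]
  · simp only [gronwallBound_of_K_ne_0 hK.ne', zero_mul, zero_add]
    calc ε / K * (exp (K * x) - 1) ≤ ε / K * (K * x * exp (K * x)) :=
          mul_le_mul_of_nonneg_left (exp_sub_one_le_mul_exp _) (div_nonneg hε hK.le)
      _ = ε * x * exp (K * x) := by field_simp

theorem norm_le_mul_mul_exp_of_norm_deriv_le {E : Type*} [NormedAddCommGroup E]
    [NormedSpace ℝ E] {f f' : ℝ → E} {K ε t : ℝ} (hK : 0 ≤ K) (hε : 0 ≤ ε) (ht : 0 ≤ t)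
    (hf : ∀ u ∈ Icc 0 t, HasDerivAt f (f' u) u) (hf0 : f 0 = 0)
    (bound : ∀ u ∈ Ico 0 t, ‖f' u‖ ≤ K * ‖f u‖ + ε) :
    ‖f t‖ ≤ ε * t * exp (K * t) := by
  have hgronwall := norm_le_gronwallBound_of_norm_deriv_right_le
    (fun u hu => (hf u hu).continuousAt.continuousWithinAt)
    (fun u hu => (hf u (Ico_subset_Icc_self hu)).hasDerivWithinAt)
    (by rw [hf0, norm_zero]) bound t ⟨ht, le_rfl⟩
  rw [sub_zero] at hgronwall
  exact hgronwall.trans (gronwallBound_zero_le_mul_exp hK hε)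

theorem norm_inner_le_of_lipschitz {F E : Type*} [SeminormedAddCommGroup F]
    [NormedAddCommGroup E] [InnerProductSpace ℝ E] {G : F → E} {L M : ℝ}
    (hG : ∀ a b, ‖G a - G b‖ ≤ L * ‖a - b‖) (a : F) {v : E} (hv : ‖v‖ ≤ M) :
    ‖⟪G a, v⟫‖ ≤ L * M * ‖a‖ + ‖G 0‖ * M := by
  have hGa : ‖G a‖ ≤ ‖G 0‖ + L * ‖a‖ := by
    simpa using (norm_le_norm_add_norm_sub' (G a) (G 0)).trans (add_le_add_right (hG a 0) _)
  calc ‖⟪G a, v⟫‖ ≤ ‖G a‖ * ‖v‖ := norm_inner_le_norm _ _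
    _ ≤ (‖G 0‖ + L * ‖a‖) * M := mul_le_mul hGa hv (norm_nonneg _) ((norm_nonneg _).trans hGa)
    _ = L * M * ‖a‖ + ‖G 0‖ * M := by ring

theorem intensity_log_bound_general
    (τ Lx LG Bβ BW : ℝ)
    (d s : ℕ)
    (x' : ℝ → EuclideanSpace ℝ (Fin d))
    (hx' : ∀ u ∈ Set.Icc (0:ℝ) τ, ‖x' u‖ ≤ Lx)
    (G : ℝ → EuclideanSpace ℝ (Fin d))
    (hG : ∀ a b : ℝ, ‖G a - G b‖ ≤ LG * ‖a - b‖)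
    (z : ℝ → ℝ) (hz0 : z 0 = 0)
    (hz : ∀ u ∈ Set.Icc (0:ℝ) τ, HasDerivAt z ⟪G (z u), x' u⟫ u)
    (β W : EuclideanSpace ℝ (Fin s)) (hβ : ‖β‖ ≤ Bβ) (hW : ‖W‖ ≤ BW) :
    ∀ t ∈ Set.Icc (0:ℝ) τ,
      z t + ⟪β, W⟫ ≤ Bβ * BW + ‖G 0‖ * Lx * t * Real.exp (LG * Lx * t) := by
  intro t ht
  have hLx : 0 ≤ Lx := (norm_nonneg _).trans (hx' t ht)
  have hLG : 0 ≤ LG := by simpa using (norm_nonneg _).trans (hG 1 0)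
  have hsub : Icc 0 t ⊆ Icc 0 τ := Icc_subset_Icc_right ht.2
  have hzt : |z t| ≤ ‖G 0‖ * Lx * t * exp (LG * Lx * t) :=
    norm_le_mul_mul_exp_of_norm_deriv_le (by positivity) (by positivity) ht.1
      (fun u hu => hz u (hsub hu)) hz0
      (fun u hu => norm_inner_le_of_lipschitz hG _ (hx' u (hsub (Ico_subset_Icc_self hu))))
  have hβW : ⟪β, W⟫ ≤ Bβ * BW :=
    (real_inner_le_norm β W).trans (mul_le_mul hβ hW (norm_nonneg _) ((norm_nonneg _).trans hβ))
  linarith [le_abs_self (z t)]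

/-- Lemma 1 (A bound on the intensity): under the controlled latent state model,
the log intensity `z t + ⟪β, W⟫` is bounded by
`Bβ * BW + ‖G 0‖ * Lx * t * exp (LG * Lx * t)` for all `t ∈ [0, τ]`. -/
theorem intensity_log_bound
    (τ Lx LG Bβ BW : ℝ) (hτ : 0 ≤ τ) (hLx : 0 ≤ Lx) (hLG : 0 ≤ LG)
    (hBβ : 0 ≤ Bβ) (hBW : 0 ≤ BW)
    (d s : ℕ) (hd : 0 < d) (hs : 0 < s)
    (x x' : ℝ → EuclideanSpace ℝ (Fin d))
    (hx : ∀ u ∈ Set.Icc (0:ℝ) τ, HasDerivAt x (x' u) u)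
    (hx' : ∀ u ∈ Set.Icc (0:ℝ) τ, ‖x' u‖ ≤ Lx)
    (G : ℝ → EuclideanSpace ℝ (Fin d))
    (hG : ∀ a b : ℝ, ‖G a - G b‖ ≤ LG * ‖a - b‖)
    (z : ℝ → ℝ) (hz0 : z 0 = 0)
    (hz : ∀ u ∈ Set.Icc (0:ℝ) τ, HasDerivAt z ⟪G (z u), x' u⟫ u)
    (β W : EuclideanSpace ℝ (Fin s)) (hβ : ‖β‖ ≤ Bβ) (hW : ‖W‖ ≤ BW) :
    ∀ t ∈ Set.Icc (0:ℝ) τ,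
      z t + ⟪β, W⟫ ≤ Bβ * BW + ‖G 0‖ * Lx * t * Real.exp (LG * Lx * t) :=
  intensity_log_bound_general τ Lx LG Bβ BW d s x' hx' G hG z hz0 hz β W hβ hW
end

section
/- Let g : ℝ → ℝ be convex and three times differentiable, and let M > 0 be such that |g'''(x)| ≤ M · g''(x) for all x ∈ ℝ. Then for every t ≥ 0: (g''(0)/M²) · Φ(−M·t) ≤ g(t) − g(0) − t · g'(0) ≤ (g''(0)/M²) · Φ(M·t), where Φ(u) = exp(u) − u − 1. -/
/-!
With `a = M`, the bound `g''' ≤ a g''` makes `g''(x) e^{-a x}` nonincreasing (Grönwall), so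
`g'' ≤ g''(0) e^{a x}` on `[0, ∞)`; integrating twice compares `g` with its second-order
Taylor polynomial, the comparison function being `g''(0) (e^{a x} - a x - 1) / a²`.
The lower bound is the same argument applied to `-g` with `a = -M`.
-/

open Real

section Comparison

variable {f f' B B' : ℝ → ℝ} {x₀ t : ℝ}

theorem le_of_hasDerivAt_le_of_le (hf : ∀ x, HasDerivAt f (f' x) x)
    (hB : ∀ x, HasDerivAt B (B' x) x) (h₀ : f x₀ ≤ B x₀) (h' : ∀ x, x₀ ≤ x → f' x ≤ B' x)
    (ht : x₀ ≤ t) : f t ≤ B t :=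
  image_le_of_deriv_right_le_deriv_boundary (b := t)
    (fun x _ => (hf x).continuousAt.continuousWithinAt) (fun x _ => (hf x).hasDerivWithinAt) h₀
    (fun x _ => (hB x).continuousAt.continuousWithinAt) (fun x _ => (hB x).hasDerivWithinAt)
    (fun x hx => h' x hx.1) ⟨ht, le_rfl⟩

theorem le_mul_exp_of_hasDerivAt_le_mul {a : ℝ} (hf : ∀ x, HasDerivAt f (f' x) x)
    (h' : ∀ x, x₀ ≤ x → f' x ≤ a * f x) (ht : x₀ ≤ t) : f t ≤ f x₀ * exp (a * (t - x₀)) := by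
  have := le_gronwallBound_of_liminf_deriv_right_le (b := t) (ε := 0)
    (fun x _ => (hf x).continuousAt.continuousWithinAt)
    (fun x _ _ hr => (hf x).hasDerivWithinAt.liminf_right_slope_le hr) le_rfl
    (fun x hx => by simpa using h' x hx.1) t ⟨ht, le_rfl⟩
  rwa [gronwallBound_ε0] at this

end Comparison

theorem taylor_remainder_le_of_deriv3_le_mul_deriv2 (g g' g'' g''' : ℝ → ℝ)
    (hd1 : ∀ x, HasDerivAt g (g' x) x) (hd2 : ∀ x, HasDerivAt g' (g'' x) x)
    (hd3 : ∀ x, HasDerivAt g'' (g''' x) x) {a : ℝ} (ha : a ≠ 0)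
    (h : ∀ x, 0 ≤ x → g''' x ≤ a * g'' x) {t : ℝ} (ht : 0 ≤ t) :
    g t - g 0 - t * g' 0 ≤ g'' 0 / a ^ 2 * (exp (a * t) - a * t - 1) := by
  have hexp (x : ℝ) : HasDerivAt (fun y => exp (a * y)) (exp (a * x) * a) x := by
    simpa using ((hasDerivAt_id x).const_mul a).exp
  have g''_le (x : ℝ) (hx : 0 ≤ x) : g'' x ≤ g'' 0 * exp (a * x) := by
    simpa using le_mul_exp_of_hasDerivAt_le_mul hd3 h hx
  have g'_le (x : ℝ) (hx : 0 ≤ x) : g' x ≤ g' 0 + g'' 0 / a * (exp (a * x) - 1) := by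
    refine le_of_hasDerivAt_le_of_le hd2
      (fun y => (((hexp y).sub_const 1).const_mul _).const_add _) (by simp) (fun y hy => ?_) hx
    field_simp
    exact g''_le y hy
  have g_le : g t ≤ g 0 + t * g' 0 + g'' 0 / a ^ 2 * (exp (a * t) - a * t - 1) := by
    refine le_of_hasDerivAt_le_of_le hd1 (fun y => ((((hasDerivAt_id y).mul_const (g' 0)).const_add
      (g 0)).add ((((hexp y).sub ((hasDerivAt_id y).const_mul a)).sub_const 1).const_mul _)))
      (by simp) (fun y hy => ?_) ht
    convert g'_le y hy using 1
    field_simp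
  linarith

theorem self_concordance_bach_general
    (g g' g'' g''' : ℝ → ℝ)
    (hd1 : ∀ x, HasDerivAt g (g' x) x)
    (hd2 : ∀ x, HasDerivAt g' (g'' x) x)
    (hd3 : ∀ x, HasDerivAt g'' (g''' x) x)
    (M : ℝ) (hM : 0 < M)
    (hsc : ∀ x, |g''' x| ≤ M * g'' x) :
    ∀ t : ℝ, 0 ≤ t →
      g'' 0 / M ^ 2 * (Real.exp (-M * t) - (-M * t) - 1) ≤ g t - g 0 - t * g' 0 ∧
      g t - g 0 - t * g' 0 ≤ g'' 0 / M ^ 2 * (Real.exp (M * t) - M * t - 1) := by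
  intro t ht
  have lower := taylor_remainder_le_of_deriv3_le_mul_deriv2 (fun x => -g x) (fun x => -g' x)
    (fun x => -g'' x) (fun x => -g''' x) (fun x => (hd1 x).neg) (fun x => (hd2 x).neg)
    (fun x => (hd3 x).neg) (neg_ne_zero.mpr hM.ne')
    (fun x _ => by linarith [neg_abs_le (g''' x), hsc x]) ht
  have upper := taylor_remainder_le_of_deriv3_le_mul_deriv2 g g' g'' g''' hd1 hd2 hd3 hM.ne'
    (fun x _ => (le_abs_self _).trans (hsc x)) ht
  rw [neg_sq, neg_div] at lower
  constructor <;> linarith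

/-- Self-concordance lemma (Bach 2010): if `g` is convex, three times differentiable
and `|g''' x| ≤ M * g'' x` everywhere, then for all `t ≥ 0`,
`(g'' 0 / M²) Φ(−M t) ≤ g t − g 0 − t g' 0 ≤ (g'' 0 / M²) Φ(M t)`
where `Φ u = exp u − u − 1`. -/
theorem self_concordance_bach
    (g g' g'' g''' : ℝ → ℝ)
    (hg : ConvexOn ℝ Set.univ g)
    (hd1 : ∀ x, HasDerivAt g (g' x) x)
    (hd2 : ∀ x, HasDerivAt g' (g'' x) x)
    (hd3 : ∀ x, HasDerivAt g'' (g''' x) x)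
    (M : ℝ) (hM : 0 < M)
    (hsc : ∀ x, |g''' x| ≤ M * g'' x) :
    ∀ t : ℝ, 0 ≤ t →
      g'' 0 / M ^ 2 * (Real.exp (-M * t) - (-M * t) - 1) ≤ g t - g 0 - t * g' 0 ∧
      g t - g 0 - t * g' 0 ≤ g'' 0 / M ^ 2 * (Real.exp (M * t) - M * t - 1) :=
  self_concordance_bach_general g g' g'' g''' hd1 hd2 hd3 M hM hsc
end

section
/- For every real number x ≥ 0: (x − 1)² ≤ (4/3 + (2/3)·x) · (x·log x − x + 1), with the convention that x·log x = 0 at x = 0. -/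
/-!
The defect `G(t) = (4/3 + 2t/3)(t log t - t + 1) - (t - 1)²` vanishes together with its
derivative at `t = 1`, and `G''(t) = (4/3)(log t + 1/t - 1) ≥ 0` by `log t ≥ 1 - 1/t`.
So `G` is convex on `[0, ∞)` with a critical point at `1`, which is therefore its minimum.
-/

open Real Set

noncomputable def pinskerDefect (t : ℝ) : ℝ :=
  (4 / 3 + 2 / 3 * t) * (t * log t - t + 1) - (t - 1) ^ 2

noncomputable def pinskerDefectDeriv (t : ℝ) : ℝ :=
  2 / 3 * (t * log t - t + 1) + (4 / 3 + 2 / 3 * t) * log t - 2 * (t - 1)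

lemma continuous_pinskerDefect : Continuous pinskerDefect := by
  unfold pinskerDefect
  fun_prop

lemma hasDerivAt_mul_log_sub_add_one {t : ℝ} (ht : t ≠ 0) :
    HasDerivAt (fun s ↦ s * log s - s + 1) (log t) t := by
  simpa using ((hasDerivAt_mul_log ht).sub (hasDerivAt_id' t)).add_const 1

lemma hasDerivAt_pinskerDefect {t : ℝ} (ht : t ≠ 0) :
    HasDerivAt pinskerDefect (pinskerDefectDeriv t) t := by
  unfold pinskerDefectDeriv
  refine ((((hasDerivAt_id' t).const_mul (2 / 3)).const_add (4 / 3)).mul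
    (hasDerivAt_mul_log_sub_add_one ht)).sub (((hasDerivAt_id' t).sub_const 1).pow 2)
    |>.congr_deriv ?_
  ring

lemma hasDerivAt_pinskerDefectDeriv {t : ℝ} (ht : t ≠ 0) :
    HasDerivAt pinskerDefectDeriv (4 / 3 * (log t + t⁻¹ - 1)) t := by
  unfold pinskerDefectDeriv
  refine (((hasDerivAt_mul_log_sub_add_one ht).const_mul (2 / 3)).add
      ((((hasDerivAt_id' t).const_mul (2 / 3)).const_add (4 / 3)).mul (hasDerivAt_log ht))).sub
    (((hasDerivAt_id' t).sub_const 1).const_mul 2) |>.congr_deriv ?_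
  field_simp
  ring

lemma convexOn_pinskerDefect : ConvexOn ℝ (Ici 0) pinskerDefect := by
  refine convexOn_of_hasDerivWithinAt2_nonneg (convex_Ici 0)
    continuous_pinskerDefect.continuousOn (fun t ht ↦ ?_) (fun t ht ↦ ?_) (fun t ht ↦ ?_)
    (f' := pinskerDefectDeriv) (f'' := fun t ↦ 4 / 3 * (log t + t⁻¹ - 1))
  all_goals rw [interior_Ici] at ht
  · exact (hasDerivAt_pinskerDefect ht.ne').hasDerivWithinAt
  · exact (hasDerivAt_pinskerDefectDeriv ht.ne').hasDerivWithinAt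
  · have := one_sub_inv_le_log_of_pos ht
    linarith

lemma isMinOn_pinskerDefect : IsMinOn pinskerDefect (Ici 0) 1 := by
  refine convexOn_pinskerDefect.isMinOn_of_rightDeriv_eq_zero (by simp) ?_
  have := (hasDerivAt_pinskerDefect one_ne_zero).hasDerivWithinAt (s := Ioi 1)
  rw [this.derivWithin (uniqueDiffWithinAt_Ioi 1)]
  norm_num [pinskerDefectDeriv]

/-- `Real.log 0 = 0`, so the convention `x·log x = 0` at `x = 0` is automatic. -/
theorem sq_sub_one_le_mul_xlogx (x : ℝ) (hx : 0 ≤ x) :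
    (x - 1) ^ 2 ≤ (4 / 3 + 2 / 3 * x) * (x * Real.log x - x + 1) := by
  have hmin : pinskerDefect 1 ≤ pinskerDefect x := isMinOn_pinskerDefect (mem_Ici.mpr hx)
  norm_num [pinskerDefect] at hmin
  linarith
end

section
/- Under the stated hypotheses: ( ∫ |a − b| dμ )² ≤ ( (4/3) ∫ b dμ + (2/3) ∫ a dμ ) · ∫ ( a · log(a/b) − a + b ) dμ. -/
/-!
Pointwise, `a log (a/b) - a + b = b · klFun (a/b)`, and with `t = a/b` the bound
`(a - b)² ≤ (2a/3 + 4b/3) (a log (a/b) - a + b)` becomes `3 (t - 1)² ≤ (2t + 4) klFun t`.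
The difference of the two sides vanishes at `t = 1` and has derivative
`4 ((t + 1) log t - 2 (t - 1))`, which is increasing (its derivative is `log t - 1 + 1/t ≥ 0`)
and zero at `t = 1`, so `t = 1` is a minimum. Cauchy–Schwarz, in the form
`∫ |f| ≤ ∫ √w √k ≤ (∫ w)^{1/2} (∫ k)^{1/2}` whenever `f² ≤ w k`, integrates the pointwise
bound.
-/

open MeasureTheory Real Set Filter InformationTheory

lemma le_of_hasDerivAt_of_nonpos_of_nonneg {f f' : ℝ → ℝ} {a c x : ℝ}
    (hf : ∀ y ∈ Ioi a, HasDerivAt f (f' y) y) (hle : ∀ y ∈ Ioo a c, f' y ≤ 0)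
    (hge : ∀ y ∈ Ioi c, 0 ≤ f' y) (hc : a < c) (hx : a < x) : f c ≤ f x := by
  rcases le_total x c with hxc | hcx
  · have hanti : AntitoneOn f (Ioc a c) :=
      antitoneOn_of_hasDerivWithinAt_nonpos (convex_Ioc a c)
        (fun y hy => (hf y hy.1).continuousAt.continuousWithinAt)
        (fun y hy => by rw [interior_Ioc] at hy; exact (hf y hy.1).hasDerivWithinAt)
        (fun y hy => by rw [interior_Ioc] at hy; exact hle y hy)
    exact hanti ⟨hx, hxc⟩ ⟨hc, le_rfl⟩ hxc
  · have hmono : MonotoneOn f (Ici c) :=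
      monotoneOn_of_hasDerivWithinAt_nonneg (convex_Ici c)
        (fun y hy => (hf y (hc.trans_le hy)).continuousAt.continuousWithinAt)
        (fun y hy => by rw [interior_Ici] at hy; exact (hf y (hc.trans hy)).hasDerivWithinAt)
        (fun y hy => by rw [interior_Ici] at hy; exact hge y hy)
    exact hmono (mem_Ici.2 le_rfl) hcx hcx

lemma monotoneOn_add_one_mul_log_sub :
    MonotoneOn (fun t => (t + 1) * log t - 2 * (t - 1)) (Ioi 0) := by
  have hderiv : ∀ t ∈ Ioi (0 : ℝ), HasDerivAt (fun t => (t + 1) * log t - 2 * (t - 1))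
      (log t - (1 - t⁻¹)) t := by
    intro t (ht : 0 < t)
    have h : HasDerivAt (fun t => (t + 1) * log t - 2 * (t - 1))
        (1 * log t + (t + 1) * t⁻¹ - 2 * 1) t :=
      (((hasDerivAt_id' t).add_const 1).mul (hasDerivAt_log ht.ne')).sub
        (((hasDerivAt_id' t).sub_const 1).const_mul 2)
    convert h using 1
    field_simp
    ring
  refine monotoneOn_of_hasDerivWithinAt_nonneg (f' := fun t => log t - (1 - t⁻¹)) (convex_Ioi 0)
    (fun t ht => (hderiv t ht).continuousAt.continuousWithinAt) (fun t ht => ?_) (fun t ht => ?_)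
  · rw [interior_Ioi] at ht
    exact (hderiv t ht).hasDerivWithinAt
  · rw [interior_Ioi] at ht
    exact sub_nonneg.2 (one_sub_inv_le_log_of_pos ht)

lemma sq_sub_one_le_mul_klFun {t : ℝ} (ht : 0 < t) :
    3 * (t - 1) ^ 2 ≤ (2 * t + 4) * klFun t := by
  have hderiv : ∀ s ∈ Ioi (0 : ℝ),
      HasDerivAt (fun s => (2 * s + 4) * klFun s - 3 * (s - 1) ^ 2)
      (4 * ((s + 1) * log s - 2 * (s - 1))) s := by
    intro s (hs : 0 < s)
    have h : HasDerivAt (fun s => (2 * s + 4) * klFun s - 3 * (s - 1) ^ 2)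
        ((2 * 1) * klFun s + (2 * s + 4) * log s - 3 * (2 * (s - 1) ^ 1 * 1)) s :=
      ((((hasDerivAt_id' s).const_mul 2).add_const 4).mul (hasDerivAt_klFun hs.ne')).sub
        ((((hasDerivAt_id' s).sub_const 1).pow 2).const_mul 3)
    convert h using 1
    rw [klFun_apply]
    ring
  have := le_of_hasDerivAt_of_nonpos_of_nonneg hderiv (fun s hs => ?_) (fun s hs => ?_) one_pos ht
  · simpa [klFun_one] using this
  · have := monotoneOn_add_one_mul_log_sub hs.1 (mem_Ioi.2 one_pos) hs.2.le
    simp only [log_one] at this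
    linarith
  · have := monotoneOn_add_one_mul_log_sub (mem_Ioi.2 one_pos) (mem_Ioi.2 (one_pos.trans hs)) hs.le
    simp only [log_one] at this
    linarith

lemma mul_klFun_div {a b : ℝ} (hb : b ≠ 0) : b * klFun (a / b) = a * log (a / b) - a + b := by
  rw [klFun_apply]
  field_simp
  ring

lemma mul_log_div_sub_add_nonneg {a b : ℝ} (ha : 0 ≤ a) (hb : 0 < b) :
    0 ≤ a * log (a / b) - a + b := by
  rw [← mul_klFun_div hb.ne']
  exact mul_nonneg hb.le (klFun_nonneg (div_nonneg ha hb.le))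

lemma sq_sub_le_mul_mul_log_div_sub_add {a b : ℝ} (ha : 0 < a) (hb : 0 < b) :
    (a - b) ^ 2 ≤ (2 / 3 * a + 4 / 3 * b) * (a * log (a / b) - a + b) := by
  have hab : a = a / b * b := (div_mul_cancel₀ a hb.ne').symm
  rw [← mul_klFun_div hb.ne']
  calc (a - b) ^ 2 = b ^ 2 / 3 * (3 * (a / b - 1) ^ 2) := by
        nth_rw 1 [hab]
        ring
    _ ≤ b ^ 2 / 3 * ((2 * (a / b) + 4) * klFun (a / b)) := by
        gcongr b ^ 2 / 3 * ?_
        exact sq_sub_one_le_mul_klFun (div_pos ha hb)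
    _ = (2 / 3 * a + 4 / 3 * b) * (b * klFun (a / b)) := by
        nth_rw 3 [hab]
        ring

section Integral

variable {X : Type*} [MeasurableSpace X] {μ : Measure X}

lemma memLp_two_sqrt {w : X → ℝ} (hw : Integrable w μ) (hw0 : 0 ≤ᵐ[μ] w) :
    MemLp (fun x => √(w x)) 2 μ := by
  refine (memLp_two_iff_integrable_sq
    (continuous_sqrt.comp_aestronglyMeasurable hw.aestronglyMeasurable)).2 (hw.congr ?_)
  filter_upwards [hw0] with x hx using (sq_sqrt hx).symm

lemma integral_sqrt_mul_sqrt_le {w k : X → ℝ} (hw : Integrable w μ) (hk : Integrable k μ)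
    (hw0 : 0 ≤ᵐ[μ] w) (hk0 : 0 ≤ᵐ[μ] k) :
    ∫ x, √(w x) * √(k x) ∂μ ≤ √(∫ x, w x ∂μ) * √(∫ x, k x ∂μ) := by
  have holder := integral_mul_le_Lp_mul_Lq_of_nonneg HolderConjugate.two_two
    (Eventually.of_forall fun x => sqrt_nonneg (w x))
    (Eventually.of_forall fun x => sqrt_nonneg (k x))
    (by simpa using memLp_two_sqrt hw hw0) (by simpa using memLp_two_sqrt hk hk0)
  have hsq {f : X → ℝ} (hf0 : 0 ≤ᵐ[μ] f) :
      ∫ x, √(f x) ^ (2 : ℝ) ∂μ = ∫ x, f x ∂μ :=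
    integral_congr_ae (by filter_upwards [hf0] with x hx using by rw [rpow_two, sq_sqrt hx])
  rwa [hsq hw0, hsq hk0, ← sqrt_eq_rpow, ← sqrt_eq_rpow] at holder

lemma sq_integral_abs_le_integral_mul_integral {f w k : X → ℝ} (hw : Integrable w μ)
    (hk : Integrable k μ) (hw0 : 0 ≤ᵐ[μ] w) (hk0 : 0 ≤ᵐ[μ] k)
    (hfwk : ∀ᵐ x ∂μ, f x ^ 2 ≤ w x * k x) :
    (∫ x, |f x| ∂μ) ^ 2 ≤ (∫ x, w x ∂μ) * ∫ x, k x ∂μ := by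
  have habs : ∀ᵐ x ∂μ, |f x| ≤ √(w x) * √(k x) := by
    filter_upwards [hw0, hfwk] with x hwx hx
    rw [← sqrt_mul hwx, ← sqrt_sq_eq_abs]
    exact sqrt_le_sqrt hx
  have hint : Integrable (fun x => √(w x) * √(k x)) μ :=
    (memLp_two_sqrt hw hw0).integrable_mul (memLp_two_sqrt hk hk0)
  calc (∫ x, |f x| ∂μ) ^ 2 ≤ (√(∫ x, w x ∂μ) * √(∫ x, k x ∂μ)) ^ 2 := by
        gcongr
        exact (integral_mono_of_nonneg (Eventually.of_forall fun x => abs_nonneg _) hint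
          habs).trans (integral_sqrt_mul_sqrt_le hw hk hw0 hk0)
    _ = (∫ x, w x ∂μ) * ∫ x, k x ∂μ := by
        rw [mul_pow, sq_sqrt (integral_nonneg_of_ae hw0), sq_sqrt (integral_nonneg_of_ae hk0)]

end Integral

theorem pinsker_type_inequality_general
    {X : Type*} [MeasurableSpace X] (μ : Measure X)
    (a b : X → ℝ)
    (hapos : ∀ᵐ x ∂μ, 0 < a x) (hbpos : ∀ᵐ x ∂μ, 0 < b x)
    (hai : Integrable a μ) (hbi : Integrable b μ)
    (hkl : Integrable (fun x => a x * Real.log (a x / b x)) μ) :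
    (∫ x, |a x - b x| ∂μ) ^ 2 ≤
      (4 / 3 * ∫ x, b x ∂μ + 2 / 3 * ∫ x, a x ∂μ) *
        ∫ x, (a x * Real.log (a x / b x) - a x + b x) ∂μ := by
  have hw : Integrable (fun x => 2 / 3 * a x + 4 / 3 * b x) μ :=
    (hai.const_mul _).add (hbi.const_mul _)
  have hw0 : ∀ᵐ x ∂μ, 0 ≤ 2 / 3 * a x + 4 / 3 * b x := by
    filter_upwards [hapos, hbpos] with x hax hbx
    positivity
  have hk0 : ∀ᵐ x ∂μ, 0 ≤ a x * log (a x / b x) - a x + b x := by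
    filter_upwards [hapos, hbpos] with x hax hbx using mul_log_div_sub_add_nonneg hax.le hbx
  have hpt : ∀ᵐ x ∂μ, (a x - b x) ^ 2 ≤
      (2 / 3 * a x + 4 / 3 * b x) * (a x * log (a x / b x) - a x + b x) := by
    filter_upwards [hapos, hbpos] with x hax hbx using sq_sub_le_mul_mul_log_div_sub_add hax hbx
  calc (∫ x, |a x - b x| ∂μ) ^ 2
      ≤ (∫ x, 2 / 3 * a x + 4 / 3 * b x ∂μ) *
          ∫ x, (a x * log (a x / b x) - a x + b x) ∂μ :=
        sq_integral_abs_le_integral_mul_integral hw ((hkl.sub hai).add hbi) hw0 hk0 hpt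
    _ = (4 / 3 * ∫ x, b x ∂μ + 2 / 3 * ∫ x, a x ∂μ) *
          ∫ x, (a x * log (a x / b x) - a x + b x) ∂μ := by
        rw [integral_add (hai.const_mul _) (hbi.const_mul _), integral_const_mul,
          integral_const_mul, add_comm]

/-- Measure-theoretic core of the Pinsker-type inequality: for positive integrable
intensities `a`, `b`,
`(∫ |a − b|)² ≤ ((4/3) ∫ b + (2/3) ∫ a) · ∫ (a log(a/b) − a + b)`. -/
theorem pinsker_type_inequality
    {X : Type*} [MeasurableSpace X] (μ : Measure X)
    (a b : X → ℝ) (ha : Measurable a) (hb : Measurable b)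
    (hapos : ∀ᵐ x ∂μ, 0 < a x) (hbpos : ∀ᵐ x ∂μ, 0 < b x)
    (hai : Integrable a μ) (hbi : Integrable b μ)
    (hkl : Integrable (fun x => a x * Real.log (a x / b x)) μ) :
    (∫ x, |a x - b x| ∂μ) ^ 2 ≤
      (4 / 3 * ∫ x, b x ∂μ + 2 / 3 * ∫ x, a x ∂μ) *
        ∫ x, (a x * Real.log (a x / b x) - a x + b x) ∂μ :=
  pinsker_type_inequality_general μ a b hapos hbpos hai hbi hkl
end

section
/- Under the stated hypotheses, the following double inequality holds: (1/(2·τ·Λ)) · ( ∫₀^τ |a(s) − b(s)| ds )² ≤ ∫₀^τ ( a(s)·log(a(s)/b(s)) − a(s) + b(s) ) ds ≤ ((exp(M) − M − 1)/M²) · ∫₀^τ ( log b(s) − log a(s) )² · a(s) ds. -/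
open MeasureTheory Real

/-!
Write `b = a e^r` pointwise. The integrand of the KL term is then `a (e^r - r - 1)`, and both
bounds reduce to facts about `e^r - r - 1`: it dominates `(e^r - 1)^2 / (2 max 1 e^r)`, and
`(e^r - r - 1) / r^2 = ∫₀¹ (1 - s) e^{rs} ds` is increasing in `r`, hence at most its value at
`M` when `r ≤ M`. The lower bound then follows from Cauchy–Schwarz,
`(∫ |a - b|)^2 ≤ τ ∫ (a - b)^2`.
-/

noncomputable def klIntegrand (x y : ℝ) : ℝ := x * log (x / y) - x + y

lemma measurable_klIntegrand : Measurable (Function.uncurry klIntegrand) := by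
  unfold klIntegrand
  fun_prop

lemma sq_exp_sub_one_le_of_nonpos {r : ℝ} (hr : r ≤ 0) :
    (exp r - 1) ^ 2 ≤ 2 * (exp r - r - 1) := by
  -- `t + t^2/2 ≤ -log (1 - t) = -r` for `t = 1 - e^r`, from the series of the logarithm
  set t := 1 - exp r
  have ht0 : 0 ≤ t := sub_nonneg.mpr (exp_le_one_iff.mpr hr)
  have ht1 : |t| < 1 := by rw [abs_of_nonneg ht0]; linarith [exp_pos r]
  have hlog := sum_le_hasSum (Finset.range 2) (fun n _ => by positivity)
    (hasSum_pow_div_log_of_abs_lt_one ht1)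
  rw [sub_sub_cancel, log_exp] at hlog
  norm_num [Finset.sum_range_succ] at hlog
  nlinarith

lemma sq_exp_sub_one_le_of_nonneg {r : ℝ} (hr : 0 ≤ r) :
    (exp r - 1) ^ 2 ≤ 2 * exp r * (exp r - r - 1) := by
  have hsinh : r ≤ sinh r := self_le_sinh_iff.mpr hr
  rw [sinh_eq] at hsinh
  have hinv : exp r * exp (-r) = 1 := by rw [← exp_add, add_neg_cancel, exp_zero]
  nlinarith [mul_le_mul_of_nonneg_left hsinh (exp_pos r).le]

lemma exists_eq_mul_exp {x y : ℝ} (hx : 0 < x) (hy : 0 < y) : ∃ r, y = x * exp r :=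
  ⟨log (y / x), by rw [exp_log (div_pos hy hx)]; field_simp⟩

lemma klIntegrand_mul_exp {x : ℝ} (hx : 0 < x) (r : ℝ) :
    klIntegrand x (x * exp r) = x * (exp r - r - 1) := by
  rw [klIntegrand, div_mul_cancel_left₀ hx.ne', log_inv, log_exp]
  ring

lemma sq_sub_le_two_mul_max_mul_klIntegrand {x y : ℝ} (hx : 0 < x) (hy : 0 < y) :
    (x - y) ^ 2 ≤ 2 * max x y * klIntegrand x y := by
  obtain ⟨r, rfl⟩ := exists_eq_mul_exp hx hy
  rw [klIntegrand_mul_exp hx]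
  rcases le_total r 0 with hr | hr
  · rw [max_eq_left (mul_le_of_le_one_right hx.le (exp_le_one_iff.mpr hr))]
    nlinarith [mul_le_mul_of_nonneg_left (sq_exp_sub_one_le_of_nonpos hr) (sq_nonneg x)]
  · rw [max_eq_right (le_mul_of_one_le_right hx.le (one_le_exp_iff.mpr hr))]
    nlinarith [mul_le_mul_of_nonneg_left (sq_exp_sub_one_le_of_nonneg hr) (sq_nonneg x)]

lemma klIntegrand_nonneg {x y : ℝ} (hx : 0 < x) (hy : 0 < y) : 0 ≤ klIntegrand x y := by
  have h := mul_le_mul_of_nonneg_left (one_sub_inv_le_log_of_pos (div_pos hx hy)) hx.le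
  rw [inv_div, mul_sub, mul_one, mul_div_cancel₀ _ hx.ne'] at h
  rw [klIntegrand]
  linarith

lemma integral_one_sub_mul_exp_mul {r : ℝ} (hr : r ≠ 0) :
    ∫ s in (0:ℝ)..1, (1 - s) * exp (r * s) = (exp r - r - 1) / r ^ 2 := by
  have hderiv : ∀ s ∈ Set.uIcc (0:ℝ) 1, HasDerivAt
      (fun s => exp (r * s) * ((1 - s) / r + 1 / r ^ 2)) ((1 - s) * exp (r * s)) s := by
    intro s _
    refine ((((hasDerivAt_id s).const_mul r).exp).mul
      ((((hasDerivAt_id s).const_sub 1).div_const r).add_const (1 / r ^ 2))).congr_deriv ?_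
    simp only [id, mul_one]
    field_simp
    ring
  rw [intervalIntegral.integral_eq_sub_of_hasDerivAt hderiv
    (Continuous.intervalIntegrable (by fun_prop) _ _)]
  field_simp
  simp
  ring

lemma exp_sub_sub_one_le_of_le {r M : ℝ} (hM : 0 < M) (hr : r ≤ M) :
    exp r - r - 1 ≤ (exp M - M - 1) / M ^ 2 * r ^ 2 := by
  rcases eq_or_ne r 0 with rfl | hr0
  · simp
  have hmono : (exp r - r - 1) / r ^ 2 ≤ (exp M - M - 1) / M ^ 2 := by
    rw [← integral_one_sub_mul_exp_mul hr0, ← integral_one_sub_mul_exp_mul hM.ne']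
    refine intervalIntegral.integral_mono_on zero_le_one
      (Continuous.intervalIntegrable (by fun_prop) _ _)
      (Continuous.intervalIntegrable (by fun_prop) _ _) fun s hs => ?_
    exact mul_le_mul_of_nonneg_left (exp_le_exp.mpr (mul_le_mul_of_nonneg_right hr hs.1))
      (sub_nonneg.mpr hs.2)
  calc exp r - r - 1 = (exp r - r - 1) / r ^ 2 * r ^ 2 := by field_simp
    _ ≤ (exp M - M - 1) / M ^ 2 * r ^ 2 := by gcongr

lemma klIntegrand_le {x y M : ℝ} (hx : 0 < x) (hy : 0 < y) (hM : 0 < M)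
    (h : log y - log x ≤ M) :
    klIntegrand x y ≤ (exp M - M - 1) / M ^ 2 * ((log y - log x) ^ 2 * x) := by
  obtain ⟨r, rfl⟩ := exists_eq_mul_exp hx hy
  rw [log_mul hx.ne' (exp_pos r).ne', log_exp, add_sub_cancel_left] at h ⊢
  rw [klIntegrand_mul_exp hx]
  nlinarith [mul_le_mul_of_nonneg_left (exp_sub_sub_one_le_of_le hM h) hx.le]

section Integral

variable {α : Type*} [MeasurableSpace α] {μ : Measure α}

lemma sq_integral_le_measureReal_mul_integral_sq [IsFiniteMeasure μ] {f : α → ℝ}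
    (hf : Integrable f μ) (hf2 : Integrable (fun x => f x ^ 2) μ) :
    (∫ x, f x ∂μ) ^ 2 ≤ μ.real Set.univ * ∫ x, f x ^ 2 ∂μ := by
  have hquad : ∀ t : ℝ,
      0 ≤ μ.real Set.univ * (t * t) + (-2 * ∫ x, f x ∂μ) * t + ∫ x, f x ^ 2 ∂μ := by
    intro t
    calc (0:ℝ) ≤ ∫ x, (f x - t) ^ 2 ∂μ := integral_nonneg fun x => sq_nonneg _
      _ = ∫ x, (f x ^ 2 - t * (2 * f x) + t ^ 2) ∂μ := by congr with x; ring
      _ = _ := by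
        rw [integral_add (hf2.sub' ((hf.const_mul 2).const_mul t)) (integrable_const _),
          integral_sub hf2 ((hf.const_mul 2).const_mul t), integral_const_mul,
          integral_const_mul, integral_const, smul_eq_mul]
        ring
  have hdiscr := discrim_le_zero hquad
  rw [discrim] at hdiscr
  linarith

lemma sq_integral_abs_sub_le_mul_integral_klIntegrand [IsFiniteMeasure μ] {a b : α → ℝ}
    {Λ : ℝ} (ha : AEMeasurable a μ) (hb : AEMeasurable b μ)
    (ha_bdd : ∀ᵐ x ∂μ, 0 < a x ∧ a x ≤ Λ) (hb_bdd : ∀ᵐ x ∂μ, 0 < b x ∧ b x ≤ Λ)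
    (hkl : Integrable (fun x => klIntegrand (a x) (b x)) μ) :
    (∫ x, |a x - b x| ∂μ) ^ 2 ≤
      2 * Λ * μ.real Set.univ * ∫ x, klIntegrand (a x) (b x) ∂μ := by
  have habs : Integrable (fun x => |a x - b x|) μ := by
    refine .of_bound (ha.sub hb).aestronglyMeasurable.norm Λ ?_
    filter_upwards [ha_bdd, hb_bdd] with x ⟨ha0, haΛ⟩ ⟨hb0, hbΛ⟩
    rw [norm_abs_eq_norm, norm_eq_abs, abs_le]
    constructor <;> linarith
  have hsq : Integrable (fun x => |a x - b x| ^ 2) μ := by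
    refine .of_bound ((ha.sub hb).aestronglyMeasurable.norm.pow 2) (Λ ^ 2) ?_
    filter_upwards [ha_bdd, hb_bdd] with x ⟨ha0, haΛ⟩ ⟨hb0, hbΛ⟩
    rw [norm_pow, norm_abs_eq_norm, norm_eq_abs, sq_abs]
    nlinarith
  have hpt : ∀ᵐ x ∂μ, |a x - b x| ^ 2 ≤ 2 * Λ * klIntegrand (a x) (b x) := by
    filter_upwards [ha_bdd, hb_bdd] with x ⟨ha0, haΛ⟩ ⟨hb0, hbΛ⟩
    calc |a x - b x| ^ 2 = (a x - b x) ^ 2 := sq_abs _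
      _ ≤ 2 * max (a x) (b x) * klIntegrand (a x) (b x) :=
        sq_sub_le_two_mul_max_mul_klIntegrand ha0 hb0
      _ ≤ 2 * Λ * klIntegrand (a x) (b x) := by
        have := klIntegrand_nonneg ha0 hb0
        gcongr
        exact max_le haΛ hbΛ
  calc (∫ x, |a x - b x| ∂μ) ^ 2 ≤ μ.real Set.univ * ∫ x, |a x - b x| ^ 2 ∂μ :=
        sq_integral_le_measureReal_mul_integral_sq habs hsq
    _ ≤ μ.real Set.univ * ∫ x, 2 * Λ * klIntegrand (a x) (b x) ∂μ :=
        mul_le_mul_of_nonneg_left (integral_mono_ae hsq (hkl.const_mul _) hpt)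
          measureReal_nonneg
    _ = 2 * Λ * μ.real Set.univ * ∫ x, klIntegrand (a x) (b x) ∂μ := by
        rw [integral_const_mul]
        ring

lemma integrable_klIntegrand {a b : α → ℝ} {M : ℝ} (hM : 0 < M)
    (ha : AEMeasurable a μ) (hb : AEMeasurable b μ) (hpos : ∀ᵐ x ∂μ, 0 < a x ∧ 0 < b x)
    (hlog : ∀ᵐ x ∂μ, log (b x) - log (a x) ≤ M)
    (hD : Integrable (fun x => (log (b x) - log (a x)) ^ 2 * a x) μ) :
    Integrable (fun x => klIntegrand (a x) (b x)) μ := by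
  refine (hD.const_mul ((exp M - M - 1) / M ^ 2)).mono'
    (measurable_klIntegrand.comp_aemeasurable (ha.prodMk hb)).aestronglyMeasurable ?_
  filter_upwards [hpos, hlog] with x ⟨ha0, hb0⟩ hlogx
  rw [norm_of_nonneg (klIntegrand_nonneg ha0 hb0)]
  exact klIntegrand_le ha0 hb0 hM hlogx

lemma integral_klIntegrand_le {a b : α → ℝ} {M : ℝ} (hM : 0 < M)
    (ha : AEMeasurable a μ) (hb : AEMeasurable b μ) (hpos : ∀ᵐ x ∂μ, 0 < a x ∧ 0 < b x)
    (hlog : ∀ᵐ x ∂μ, log (b x) - log (a x) ≤ M)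
    (hD : Integrable (fun x => (log (b x) - log (a x)) ^ 2 * a x) μ) :
    ∫ x, klIntegrand (a x) (b x) ∂μ ≤
      (exp M - M - 1) / M ^ 2 * ∫ x, (log (b x) - log (a x)) ^ 2 * a x ∂μ := by
  rw [← integral_const_mul]
  refine integral_mono_ae (integrable_klIntegrand hM ha hb hpos hlog hD) (hD.const_mul _) ?_
  filter_upwards [hpos, hlog] with x ⟨ha0, hb0⟩ hlogx
  exact klIntegrand_le ha0 hb0 hM hlogx

end Integral

/-- Abstract form of Proposition 2 (double inequality): `c₁ TV² ≤ KL ≤ c₂ D²` with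
`c₁ = 1/(2τΛ)` and `c₂ = (exp M − M − 1)/M²`, for positive intensities `a`, `b`
bounded by `Λ` on `[0, τ]` whose log-ratio is bounded by `M`. -/
theorem double_inequality
    (τ Λ M : ℝ) (hτ : 0 < τ) (hΛ : 0 < Λ) (hM : 0 < M)
    (a b : ℝ → ℝ) (ha : Measurable a) (hb : Measurable b)
    (hapos : ∀ s ∈ Set.Icc (0:ℝ) τ, 0 < a s ∧ a s ≤ Λ)
    (hbpos : ∀ s ∈ Set.Icc (0:ℝ) τ, 0 < b s ∧ b s ≤ Λ)
    (hlog : ∀ s ∈ Set.Icc (0:ℝ) τ, |Real.log (b s) - Real.log (a s)| ≤ M) :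
    1 / (2 * τ * Λ) * (∫ s in Set.Icc (0:ℝ) τ, |a s - b s|) ^ 2 ≤
        (∫ s in Set.Icc (0:ℝ) τ, (a s * Real.log (a s / b s) - a s + b s)) ∧
      (∫ s in Set.Icc (0:ℝ) τ, (a s * Real.log (a s / b s) - a s + b s)) ≤
        (Real.exp M - M - 1) / M ^ 2 *
          ∫ s in Set.Icc (0:ℝ) τ, (Real.log (b s) - Real.log (a s)) ^ 2 * a s := by
  set μ := volume.restrict (Set.Icc (0:ℝ) τ)
  have ha_bdd : ∀ᵐ s ∂μ, 0 < a s ∧ a s ≤ Λ :=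
    ae_restrict_of_forall_mem measurableSet_Icc hapos
  have hb_bdd : ∀ᵐ s ∂μ, 0 < b s ∧ b s ≤ Λ :=
    ae_restrict_of_forall_mem measurableSet_Icc hbpos
  have hlog_bdd : ∀ᵐ s ∂μ, |log (b s) - log (a s)| ≤ M :=
    ae_restrict_of_forall_mem measurableSet_Icc hlog
  have hpos : ∀ᵐ s ∂μ, 0 < a s ∧ 0 < b s := by
    filter_upwards [ha_bdd, hb_bdd] with s has hbs using ⟨has.1, hbs.1⟩
  have hlog_le : ∀ᵐ s ∂μ, log (b s) - log (a s) ≤ M :=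
    hlog_bdd.mono fun s hs => (le_abs_self _).trans hs
  have hD : Integrable (fun s => (log (b s) - log (a s)) ^ 2 * a s) μ := by
    refine .of_bound (by fun_prop) (M ^ 2 * Λ) ?_
    filter_upwards [ha_bdd, hlog_bdd] with s ⟨ha0, haΛ⟩ hs
    rw [norm_of_nonneg (by positivity)]
    exact mul_le_mul (sq_le_sq' (abs_le.mp hs).1 (abs_le.mp hs).2) haΛ ha0.le (sq_nonneg M)
  have hpinsker := sq_integral_abs_sub_le_mul_integral_klIntegrand ha.aemeasurable
    hb.aemeasurable ha_bdd hb_bdd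
    (integrable_klIntegrand hM ha.aemeasurable hb.aemeasurable hpos hlog_le hD)
  have hvol : μ.real Set.univ = τ := by simp [μ, hτ.le]
  refine ⟨?_, integral_klIntegrand_le hM ha.aemeasurable hb.aemeasurable hpos hlog_le hD⟩
  rw [hvol] at hpinsker
  rw [one_div, inv_mul_le_iff₀ (by positivity)]
  unfold klIntegrand at hpinsker
  linarith
end

section
/- The function h : ℝ → ℝ defined by h(x) = (exp(x) − x − 1)/x² for x ≠ 0 and h(0) = 1/2 is monotone nondecreasing on ℝ. -/
/-!
By Taylor's formula with integral remainder, `exp x - x - 1 = x² ∫₀¹ (1 - t) e^{tx} dt`, so the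
function is `x ↦ ∫₀¹ (1 - t) e^{tx} dt` (also at `0`, where the integral is `1/2`). Its integrand
is nondecreasing in `x` for every `t ∈ [0, 1]`.
-/

open Real intervalIntegral

lemma intervalIntegrable_one_sub_mul_exp_mul (x a b : ℝ) :
    IntervalIntegrable (fun t => (1 - t) * exp (t * x)) MeasureTheory.volume a b :=
  (by fun_prop : Continuous fun t => (1 - t) * exp (t * x)).intervalIntegrable a b

lemma integral_one_sub_mul_exp_mul_of_ne_zero {x : ℝ} (hx : x ≠ 0) :
    ∫ t in (0 : ℝ)..1, (1 - t) * exp (t * x) = (exp x - x - 1) / x ^ 2 := by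
  have hderiv (t : ℝ) : HasDerivAt (fun t => (1 - t) * exp (t * x) / x + exp (t * x) / x ^ 2)
      ((1 - t) * exp (t * x)) t := by
    have hexp : HasDerivAt (fun t => exp (t * x)) (exp (t * x) * x) t :=
      (hasDerivAt_mul_const x).exp
    refine ((((hasDerivAt_id t).const_sub 1).mul hexp).div_const x).add
      (hexp.div_const (x ^ 2)) |>.congr_deriv ?_
    simp only [id]
    field_simp
    ring
  rw [integral_eq_sub_of_hasDerivAt (fun t _ => hderiv t)
    (intervalIntegrable_one_sub_mul_exp_mul x 0 1)]
  simp only [one_mul, zero_mul, sub_zero, sub_self, exp_zero]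
  field_simp
  ring

lemma integral_one_sub_mul_exp_mul_s12 (x : ℝ) :
    ∫ t in (0 : ℝ)..1, (1 - t) * exp (t * x) =
      if x = 0 then 1 / 2 else (exp x - x - 1) / x ^ 2 := by
  split_ifs with hx
  · simp only [hx, mul_zero, exp_zero, mul_one]
    rw [integral_sub intervalIntegrable_const intervalIntegrable_id]
    norm_num
  · exact integral_one_sub_mul_exp_mul_of_ne_zero hx

/-- The continuous extension of `x ↦ (exp x − x − 1)/x²` (with value `1/2` at `0`)
is monotone nondecreasing on `ℝ`. -/
theorem monotone_exp_sub_div_sq :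
    Monotone (fun x : ℝ => if x = 0 then 1 / 2 else (Real.exp x - x - 1) / x ^ 2) := by
  intro x y hxy
  simp only [← integral_one_sub_mul_exp_mul_s12]
  refine integral_mono_on zero_le_one (intervalIntegrable_one_sub_mul_exp_mul x 0 1)
    (intervalIntegrable_one_sub_mul_exp_mul y 0 1) fun t ht => ?_
  exact mul_le_mul_of_nonneg_left (exp_le_exp.2 (mul_le_mul_of_nonneg_left hxy ht.1))
    (sub_nonneg.2 ht.2)
end
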